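/- Starting from a configuration satisfying the state invariant, if the food particle does not change (is neither placed, removed, nor moved) from the current point on, then under the Adaptive α-Compression Algorithm the expected number of steps until a configuration with no residual components is reached is at most 2n²/(1−6p), where n is the number of particles and p<1/6 is the algorithm's fixed state-change probability. -/

import Mathlib

open scoped Classical ENNReal

noncomputable section

/-! ## The Adaptive α-Compression Algorithm of the paper, formalized.

Particles occupy distinct vertices of a `L × L` triangular-lattice torus (`N = L²` vertices).
Each occupied vertex carries one of six states: dispersion `D`, dispersion-token `DT`, or a
compression state `C g f` where `g` is the growth-token bit and `f` the food-adjacency bit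
(`C false false = C`, `C true false = C_G`, `C false true = C_F`, `C true true = C_{GF}`).
A single immobile food particle may occupy one (otherwise empty) vertex.

At each discrete step one occupied vertex is chosen uniformly at random and activated: it
performs the state-change step followed by the movement step of the algorithm, exactly as
described in the paper (with a fixed constant `p < 1/6` and bias parameter `λ > 1`).
The one-step transition is formalized as a `PMF` on configurations. -/

/-- Vertices of the `L × L` triangular-lattice torus. -/
abbrev V (L : ℕ) := ZMod L × ZMod L

/-- The six lattice directions. -/
def dirList (L : ℕ) : List (V L) :=
  [(1, 0), (-1, 0), (0, 1), (0, -1), (1, 1), (-1, -1)]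

def dirFinset (L : ℕ) : Finset (V L) := (dirList L).toFinset

lemma dirFinset_nonempty (L : ℕ) : (dirFinset L).Nonempty :=
  ⟨(1, 0), by simp [dirFinset, dirList]⟩

/-- The neighbours of a vertex. -/
def nbrs {L : ℕ} (v : V L) : Finset (V L) := (dirFinset L).image (fun d => v + d)

/-- Particle states: dispersion `D`, dispersion token `DT`, and the four compression
states `C (growth bit) (food bit)`. -/
inductive CState : Type
  | D : CState
  | DT : CState
  | C : Bool → Bool → CState
deriving DecidableEq

/-- A configuration: each vertex is empty or holds a particle with its state; a food
particle may occupy one vertex. -/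
structure Conf (L : ℕ) : Type where
  occ : V L → Option CState
  food : Option (V L)

variable {L : ℕ}

/-- `v` holds a particle in a compression state or the dispersion-token state. -/
def isTokenSite (c : Conf L) (v : V L) : Prop := ∃ s, c.occ v = some s ∧ s ≠ CState.D

/-- Cluster particles: compression-state particles, `DT`-state particles, and the food. -/
def isClusterSite (c : Conf L) (v : V L) : Prop := c.food = some v ∨ isTokenSite c v

/-- `v` is adjacent to the food particle. -/
def adjFood (c : Conf L) (v : V L) : Prop := ∃ f, c.food = some f ∧ f ∈ nbrs v

/-- Connectivity within the subgraph induced on compression-state and `DT`-state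
particles (the food particle belongs to no component). -/
def compReach (c : Conf L) : V L → V L → Prop :=
  Relation.ReflTransGen (fun a b => isTokenSite c a ∧ isTokenSite c b ∧ b ∈ nbrs a)

/-- The state invariant: every component (of compression-state and `DT`-state particles)
contains a particle in state `C_{GF}`, `C_F` or `DT`. -/
def StateInvariant (c : Conf L) : Prop :=
  ∀ v, isTokenSite c v → ∃ w, compReach c v w ∧
    (c.occ w = some CState.DT ∨ ∃ g, c.occ w = some (CState.C g true))

def setSt (c : Conf L) (v : V L) (s : CState) : Conf L :=
  ⟨Function.update c.occ v (some s), c.food⟩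

/-- Switch `v` to the dispersion state and all its compression-state neighbours to `DT`. -/
def spreadDT (c : Conf L) (v : V L) : Conf L :=
  ⟨fun w => if w = v then some CState.D
      else if w ∈ nbrs v ∧ ∃ g f, c.occ w = some (CState.C g f) then some CState.DT
      else c.occ w,
    c.food⟩

/-- Remove a growth token. -/
def clearG : Option CState → Option CState
  | some (CState.C _ f) => some (CState.C false f)
  | o => o

def moveP (c : Conf L) (v w : V L) (s : CState) : Conf L :=
  ⟨Function.update (Function.update c.occ v none) w (some s), c.food⟩

/-- The Bernoulli `PMF` with an `ℝ≥0∞` parameter (the older Mathlib's `PMF.bernoulli`). -/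
def bernoulliENN (p : ℝ≥0∞) (h : p ≤ 1) : PMF Bool :=
  PMF.ofFintype (fun b => cond b p (1 - p)) (by simp [h])

/-- Step 1 (state change) of the algorithm, for the activated particle at `v`. -/
def stateChange (p : ℝ≥0∞) (hp : p ≤ 1) (c : Conf L) (v : V L) : PMF (Conf L) :=
  match c.occ v with
  | none => PMF.pure c
  | some CState.D =>
      if adjFood c v then
        (bernoulliENN p hp).bind fun b =>
          PMF.pure (if b then setSt c v (CState.C false true) else c)
      else if hG : ((nbrs v).filter fun w => ∃ f, c.occ w = some (CState.C true f)).Nonempty then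
        (PMF.uniformOfFinset _ hG).bind fun w =>
          (bernoulliENN p hp).bind fun b =>
            PMF.pure (if b then
                setSt ⟨Function.update c.occ w (clearG (c.occ w)), c.food⟩ v
                  (CState.C false false)
              else c)
      else PMF.pure c
  | some CState.DT => PMF.pure (spreadDT c v)
  | some (CState.C g f) =>
      if (f = true ∧ ¬ adjFood c v) ∨ (f = false ∧ adjFood c v) ∨
          (adjFood c v ∧ ∃ w fd, c.food = some fd ∧ w ∈ nbrs v ∧ w ∈ nbrs fd ∧
            ∃ g', c.occ w = some (CState.C g' false)) then
        PMF.pure (spreadDT c v)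
      else if g then
        (PMF.uniformOfFinset (dirFinset L) (dirFinset_nonempty L)).bind fun d =>
          PMF.pure
            (match c.occ (v + d) with
              | some (CState.C false f') =>
                  setSt (setSt c v (CState.C false f)) (v + d) (CState.C true f')
              | _ => c)
      else if adjFood c v then
        (bernoulliENN p hp).bind fun b =>
          PMF.pure (if b then setSt c v (CState.C true f) else c)
      else PMF.pure c

/-- `N(ℓ ∪ ℓ')`. -/
def NNset (v w : V L) : Set (V L) := ((nbrs v : Set (V L)) ∪ (nbrs w : Set (V L))) \ {v, w}

/-- Connectivity between cluster particles through a set `A`. -/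
def connWithin (c : Conf L) (A : Set (V L)) : V L → V L → Prop :=
  Relation.ReflTransGen
    (fun a b => a ∈ A ∧ b ∈ A ∧ isClusterSite c a ∧ isClusterSite c b ∧ b ∈ nbrs a)

/-- Property 1 of valid compression moves. -/
def MoveProp1 (c : Conf L) (v w : V L) : Prop :=
  (nbrs v ∩ nbrs w).Nonempty ∧
    ∀ x ∈ NNset v w, isClusterSite c x →
      ∃ y ∈ nbrs v ∩ nbrs w, isClusterSite c y ∧ connWithin c (NNset v w) x y

/-- Property 2 of valid compression moves. -/
def MoveProp2 (c : Conf L) (v w : V L) : Prop :=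
  nbrs v ∩ nbrs w = ∅ ∧
  (∃ x ∈ nbrs v, isClusterSite c x) ∧ (∃ x ∈ nbrs w, isClusterSite c x) ∧
  (∀ x ∈ ((nbrs v : Set (V L)) \ {w}), ∀ y ∈ ((nbrs v : Set (V L)) \ {w}),
      isClusterSite c x → isClusterSite c y →
        connWithin c ((nbrs v : Set (V L)) \ {w}) x y) ∧
  (∀ x ∈ ((nbrs w : Set (V L)) \ {v}), ∀ y ∈ ((nbrs w : Set (V L)) \ {v}),
      isClusterSite c x → isClusterSite c y →
        connWithin c ((nbrs w : Set (V L)) \ {v}) x y)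

/-- A valid compression move from `v` to the adjacent empty non-food site `w`. -/
def validMove (c : Conf L) (v w : V L) : Prop :=
  w ∈ nbrs v ∧ c.occ w = none ∧ c.food ≠ some w ∧
    ((nbrs v).filter fun x => isClusterSite c x).card < 5 ∧
    (MoveProp1 c v w ∨ MoveProp2 c v w)

/-- `e(σ') - e(σ)`: the change in the number of edges between cluster particles caused by
moving the particle from `v` to `w` (computable locally). -/
def moveDelta (c : Conf L) (v w : V L) : ℤ :=
  (((nbrs w).filter fun x => x ≠ v ∧ isClusterSite c x).card : ℤ) -
    (((nbrs v).filter fun x => x ≠ w ∧ isClusterSite c x).card : ℤ)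

/-- Step 2 (movement) of the algorithm for the activated particle at `v`: dispersion
particles perform a simple-exclusion random-walk step; compression particles perform a
Metropolis-filtered valid compression move with probability `min(1, λ^{e(σ')-e(σ)})`, and
afterwards set their food bit according to food adjacency. -/
def movement (lam : ℝ) (c : Conf L) (v : V L) : PMF (Conf L) :=
  match c.occ v with
  | some CState.D =>
      (PMF.uniformOfFinset (dirFinset L) (dirFinset_nonempty L)).bind fun d =>
        PMF.pure
          (if c.occ (v + d) = none ∧ c.food ≠ some (v + d) then moveP c v (v + d) CState.D
           else c)
  | some (CState.C g _) =>
      (PMF.uniformOfFinset (dirFinset L) (dirFinset_nonempty L)).bind fun d =>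
        if validMove c v (v + d) then
          (bernoulliENN (min 1 (ENNReal.ofReal (lam ^ moveDelta c v (v + d))))
              (min_le_left _ _)).bind fun b =>
            PMF.pure
              (if b then
                  moveP c v (v + d) (CState.C g (if adjFood c (v + d) then true else false))
                else setSt c v (CState.C g (if adjFood c v then true else false)))
        else PMF.pure (setSt c v (CState.C g (if adjFood c v then true else false)))
  | _ => PMF.pure c

variable [NeZero L]

/-- The set of occupied (particle) vertices. -/
def occupiedSet (c : Conf L) : Finset (V L) :=
  Finset.univ.filter fun v => (c.occ v).isSome

/-- The number of particles. -/
def pcount (c : Conf L) : ℕ := (occupiedSet c).card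

/-- One step of the Adaptive α-Compression Algorithm: a uniformly random particle is
activated and performs its state-change step followed by its movement step.  The food
particle never changes during algorithm steps. -/
def compStep (p : ℝ≥0∞) (hp : p ≤ 1) (lam : ℝ) (c : Conf L) : PMF (Conf L) :=
  if h : (occupiedSet c).Nonempty then
    (PMF.uniformOfFinset _ h).bind fun v =>
      (stateChange p hp c v).bind fun c' => movement lam c' v
  else PMF.pure c

/-- `surviveP step goal t a` is the probability that a Markov chain with one-step kernel
`step` started at `a` has not visited the goal set within the first `t` steps. -/
def surviveP {α : Type*} (step : α → PMF α) (goal : α → Prop) : ℕ → α → ℝ≥0∞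
  | 0, a => if goal a then 0 else 1
  | t + 1, a => if goal a then 0 else ∑' b, step a b * surviveP step goal t b

/-- The expected hitting time of the goal set for the Markov chain with kernel `step`
started at `a`: `E[T] = ∑_{t ≥ 0} P(T > t)` (in `ℝ≥0∞`). -/
def ehit {α : Type*} (step : α → PMF α) (goal : α → Prop) (a : α) : ℝ≥0∞ :=
  ∑' t, surviveP step goal t a

end

/-- A residual particle witness: a `DT`-state particle, a compression particle with the food
bit set that is not adjacent to food, or a compression particle without the food bit set
that is adjacent to food.  (A residual component is exactly a component containing such a
particle, so "no residual components" is equivalent to "no such particle exists".) -/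
def badParticle {L : ℕ} (c : Conf L) (v : V L) : Prop :=
  c.occ v = some CState.DT ∨
  (∃ g, c.occ v = some (CState.C g true) ∧ ¬ adjFood c v) ∨
  (∃ g, c.occ v = some (CState.C g false) ∧ adjFood c v)

/-- The configuration has no residual components. -/
def NoResidual {L : ℕ} (c : Conf L) : Prop := ∀ v, ¬ badParticle c v

/-! Take as potential the number of compression and `DT` particles plus the number of growth
tokens. It grows only when a dispersion particle joins next to the food or a food-adjacent
particle creates a growth token, each with probability `p`, and at most six sites are adjacent to
the food. An activated residual particle broadcasts `DT` and turns into a dispersion particle,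
losing at least one unit. Since each particle is activated with probability `1 / n`, the potential
drops in expectation by at least `(1 - 6p) / n` per step while a residual particle exists, and it
starts at most `2n`; the drift argument bounds the expected hitting time by `2n / ((1 - 6p) / n)`.
-/

namespace PMF

variable {α β : Type*}

noncomputable def expect (μ : PMF α) (f : α → ℝ≥0∞) : ℝ≥0∞ := ∑' a, μ a * f a

@[simp]
lemma expect_pure (a : α) (f : α → ℝ≥0∞) : (PMF.pure a).expect f = f a := by
  rw [expect, tsum_eq_single a fun b hb => by simp [PMF.pure_apply, hb]]
  simp [PMF.pure_apply]

lemma expect_bind (μ : PMF α) (g : α → PMF β) (f : β → ℝ≥0∞) :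
    (μ.bind g).expect f = μ.expect fun a => (g a).expect f := by
  simp only [expect, PMF.bind_apply, ← ENNReal.tsum_mul_right, ← ENNReal.tsum_mul_left,
    mul_assoc]
  exact ENNReal.tsum_comm

lemma expect_mul_left (μ : PMF α) (x : ℝ≥0∞) (f : α → ℝ≥0∞) :
    μ.expect (fun a => x * f a) = x * μ.expect f := by
  simp only [expect, ← ENNReal.tsum_mul_left, mul_left_comm]

lemma expect_const (μ : PMF α) (x : ℝ≥0∞) : μ.expect (fun _ => x) = x := by
  rw [expect, ENNReal.tsum_mul_right, PMF.tsum_coe, one_mul]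

lemma expect_mono {μ : PMF α} {f g : α → ℝ≥0∞} (h : ∀ a ∈ μ.support, f a ≤ g a) :
    μ.expect f ≤ μ.expect g := by
  refine ENNReal.tsum_le_tsum fun a => ?_
  by_cases ha : μ a = 0
  · simp [ha]
  · exact mul_le_mul_right (h a ha) _

lemma expect_congr {μ : PMF α} {f g : α → ℝ≥0∞} (h : ∀ a ∈ μ.support, f a = g a) :
    μ.expect f = μ.expect g :=
  le_antisymm (expect_mono fun a ha => (h a ha).le) (expect_mono fun a ha => (h a ha).ge)

lemma expect_le_of_forall_le {μ : PMF α} {f : α → ℝ≥0∞} {x : ℝ≥0∞}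
    (h : ∀ a ∈ μ.support, f a ≤ x) : μ.expect f ≤ x :=
  (expect_mono h).trans_eq (expect_const μ x)

lemma expect_uniformOfFinset (s : Finset α) (hs : s.Nonempty) (f : α → ℝ≥0∞) :
    (uniformOfFinset s hs).expect f = (∑ a ∈ s, f a) / s.card := by
  rw [expect, tsum_eq_sum (s := s) fun a ha => by simp [uniformOfFinset_apply, ha],
    Finset.sum_congr rfl fun a ha => by rw [uniformOfFinset_apply, if_pos ha],
    ← Finset.mul_sum, div_eq_mul_inv, mul_comm]

lemma expect_bernoulliENN (q : ℝ≥0∞) (hq : q ≤ 1) (f : Bool → ℝ≥0∞) :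
    (bernoulliENN q hq).expect f = q * f true + (1 - q) * f false := by
  simp [expect, bernoulliENN]

lemma expect_bernoulliENN_le {q : ℝ≥0∞} (hq : q ≤ 1) {f : Bool → ℝ≥0∞} {x : ℝ≥0∞}
    (htrue : f true ≤ x + 1) (hfalse : f false ≤ x) :
    (bernoulliENN q hq).expect f ≤ x + q :=
  calc (bernoulliENN q hq).expect f ≤ q * (x + 1) + (1 - q) * x := by
        rw [expect_bernoulliENN]; gcongr
    _ = (q + (1 - q)) * x + q := by ring
    _ = x + q := by rw [add_tsub_cancel_of_le hq, one_mul]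

end PMF

section HittingTime

variable {α : Type*} (step : α → PMF α) (goal : α → Prop)

lemma sum_range_succ_surviveP (T : ℕ) (a : α) :
    ∑ t ∈ Finset.range (T + 1), surviveP step goal t a =
      if goal a then 0
      else 1 + (step a).expect fun b => ∑ t ∈ Finset.range T, surviveP step goal t b := by
  rw [Finset.sum_range_succ']
  by_cases ha : goal a
  · simp [surviveP, ha]
  · simp only [surviveP, if_neg ha, PMF.expect, Finset.mul_sum]
    rw [add_comm, Summable.tsum_finsetSum fun _ _ => ENNReal.summable]

theorem mul_ehit_le_of_drift (Φ : α → ℝ≥0∞) (ε : ℝ≥0∞) (I : α → Prop)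
    (hI : ∀ a, I a → ∀ b ∈ (step a).support, I b)
    (hdrift : ∀ a, I a → ¬ goal a → (step a).expect Φ + ε ≤ Φ a) {a : α} (ha : I a) :
    ε * ehit step goal a ≤ Φ a := by
  have partial_sums :
      ∀ T a, I a → ε * ∑ t ∈ Finset.range T, surviveP step goal t a ≤ Φ a := by
    intro T
    induction T with
    | zero => simp
    | succ T ih =>
      intro a ha
      rw [sum_range_succ_surviveP]
      split_ifs with hgoal
      · simp
      calc ε * (1 + (step a).expect fun b => ∑ t ∈ Finset.range T, surviveP step goal t b)
          = (step a).expect (fun b => ε * ∑ t ∈ Finset.range T, surviveP step goal t b) +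
              ε := by
            rw [PMF.expect_mul_left]; ring
        _ ≤ (step a).expect Φ + ε := by
            gcongr
            exact PMF.expect_mono fun b hb => ih b (hI a ha b hb)
        _ ≤ Φ a := hdrift a ha hgoal
  rw [ehit, ENNReal.tsum_eq_iSup_nat, ENNReal.mul_iSup]
  exact iSup_le fun T => partial_sums T a ha

lemma ehit_eq_zero_of_goal {a : α} (ha : goal a) : ehit step goal a = 0 := by
  rw [ehit, ENNReal.tsum_eq_zero]
  rintro (_ | t) <;> simp [surviveP, ha]

end HittingTime

section SiteSums

variable {L : ℕ} [NeZero L] (f : Option CState → ℕ)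

def siteSum (c : Conf L) : ℕ := ∑ v, f (c.occ v)

lemma siteSum_update_add (c : Conf L) (v : V L) (o : Option CState) :
    siteSum f ⟨Function.update c.occ v o, c.food⟩ + f (c.occ v) = siteSum f c + f o := by
  simp only [siteSum, ← Function.comp_apply (f := f), Function.comp_update]
  rw [Finset.sum_update_of_mem (Finset.mem_univ v),
    ← Finset.add_sum_erase _ _ (Finset.mem_univ v), Finset.sdiff_singleton_eq_erase]
  simp only [Function.comp_apply]
  ring

variable {f}

lemma siteSum_update_of_eq {c : Conf L} {v : V L} {o : Option CState} (h : f o = f (c.occ v)) :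
    siteSum f ⟨Function.update c.occ v o, c.food⟩ = siteSum f c := by
  have := siteSum_update_add f c v o
  omega

lemma siteSum_setSt {c : Conf L} {v : V L} {s : CState} (h : f (some s) = f (c.occ v)) :
    siteSum f (setSt c v s) = siteSum f c :=
  siteSum_update_of_eq h

lemma siteSum_moveP {c : Conf L} {v w : V L} {s : CState} (hw : c.occ w = none)
    (h : f (some s) = f (c.occ v)) : siteSum f (moveP c v w s) = siteSum f c := by
  have hvacate := siteSum_update_add f c v none
  have hfill := siteSum_update_add f ⟨Function.update c.occ v none, c.food⟩ w (some s)
  have hw' : Function.update c.occ v none w = none := by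
    by_cases hvw : w = v
    · simp [hvw]
    · simp [hvw, hw]
  simp only [hw'] at hfill
  change siteSum f (moveP c v w s) + _ = _ at hfill
  omega

lemma siteSum_spreadDT_add_le {c : Conf L} {v : V L}
    (hDT : ∀ g b, f (some CState.DT) ≤ f (some (CState.C g b))) :
    siteSum f (spreadDT c v) + f (c.occ v) ≤ siteSum f c + f (some CState.D) := by
  have hv : (spreadDT c v).occ v = some CState.D := if_pos rfl
  have hrest : ∀ u ∈ Finset.univ.erase v, f ((spreadDT c v).occ u) ≤ f (c.occ u) := by
    intro u hu
    simp only [spreadDT, if_neg (Finset.ne_of_mem_erase hu)]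
    split_ifs with hC
    · obtain ⟨-, g, b, hgb⟩ := hC
      exact hgb ▸ hDT g b
    · exact le_rfl
  have hsum := Finset.sum_le_sum hrest
  rw [siteSum, siteSum, ← Finset.add_sum_erase _ _ (Finset.mem_univ v),
    ← Finset.add_sum_erase _ _ (Finset.mem_univ v), hv]
  omega

end SiteSums

section Potential

variable {L : ℕ} [NeZero L]

def stateWeight : Option CState → ℕ
  | some CState.DT => 1
  | some (CState.C g _) => if g then 2 else 1
  | _ => 0

def potential (c : Conf L) : ℕ := siteSum stateWeight c

lemma stateWeight_le_two (o : Option CState) : stateWeight o ≤ 2 := by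
  rcases o with _ | _ | _ | ⟨_ | _, _⟩ <;> simp [stateWeight]

lemma one_le_stateWeight_C (g b : Bool) : 1 ≤ stateWeight (some (CState.C g b)) := by
  cases g <;> simp [stateWeight]

lemma potential_le_two_mul_pcount (c : Conf L) : potential c ≤ 2 * pcount c := by
  rw [pcount, occupiedSet, Finset.card_filter, Finset.mul_sum]
  refine Finset.sum_le_sum fun v _ => ?_
  rcases hv : c.occ v with _ | s
  · simp [stateWeight]
  · simpa using stateWeight_le_two (some s)

lemma potential_update_add (c : Conf L) (v : V L) (o : Option CState) :
    potential ⟨Function.update c.occ v o, c.food⟩ + stateWeight (c.occ v) =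
      potential c + stateWeight o :=
  siteSum_update_add _ c v o

lemma potential_setSt_add (c : Conf L) (v : V L) (s : CState) :
    potential (setSt c v s) + stateWeight (c.occ v) = potential c + stateWeight (some s) :=
  potential_update_add c v (some s)

lemma potential_setSt_le_succ {c : Conf L} {v : V L} {s : CState}
    (h : stateWeight (some s) ≤ stateWeight (c.occ v) + 1) :
    potential (setSt c v s) ≤ potential c + 1 := by
  have := potential_setSt_add c v s
  omega

lemma potential_spreadDT_add_le (c : Conf L) (v : V L) :
    potential (spreadDT c v) + stateWeight (c.occ v) ≤ potential c :=
  siteSum_spreadDT_add_le fun g _ => one_le_stateWeight_C g _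

lemma potential_join_growth {c : Conf L} {v w : V L} {b : Bool} (hv : c.occ v = some CState.D)
    (hw : c.occ w = some (CState.C true b)) :
    potential (setSt ⟨Function.update c.occ w (clearG (c.occ w)), c.food⟩ v
      (CState.C false false)) = potential c := by
  have hvw : v ≠ w := fun h => by simp [h, hw] at hv
  have hclear := potential_update_add c w (clearG (c.occ w))
  have hjoin := potential_setSt_add ⟨Function.update c.occ w (clearG (c.occ w)), c.food⟩ v
    (CState.C false false)
  have hw2 : stateWeight (c.occ w) = 2 := by simp [hw, stateWeight]
  have hw1 : stateWeight (clearG (c.occ w)) = 1 := by simp [hw, clearG, stateWeight]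
  have hv0 : stateWeight (Function.update c.occ w (clearG (c.occ w)) v) = 0 := by
    simp [Function.update_of_ne hvw, hv, stateWeight]
  rw [hw2, hw1] at hclear
  rw [hv0] at hjoin
  simp only [stateWeight, Bool.false_eq_true, if_false] at hjoin
  omega

lemma potential_pass_growth {c : Conf L} {v u : V L} {b b' : Bool}
    (hv : c.occ v = some (CState.C true b)) (hu : c.occ u = some (CState.C false b')) :
    potential (setSt (setSt c v (CState.C false b)) u (CState.C true b')) = potential c := by
  have hgive := potential_setSt_add c v (CState.C false b)
  have htake := potential_setSt_add (setSt c v (CState.C false b)) u (CState.C true b')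
  have hu' : stateWeight ((setSt c v (CState.C false b)).occ u) = 1 := by
    by_cases huv : u = v <;> simp [setSt, huv, hu, stateWeight]
  rw [hu'] at htake
  simp only [hv, stateWeight, Bool.false_eq_true, if_false, if_true] at hgive htake
  omega

end Potential

section ParticleCount

variable {L : ℕ} [NeZero L]

lemma pcount_eq_siteSum (c : Conf L) :
    pcount c = siteSum (fun o => if o.isSome then 1 else 0) c := by
  rw [pcount, occupiedSet, Finset.card_filter, siteSum]

lemma pcount_update {c : Conf L} {v : V L} {o : Option CState}
    (h : o.isSome = (c.occ v).isSome) :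
    pcount ⟨Function.update c.occ v o, c.food⟩ = pcount c := by
  simp only [pcount_eq_siteSum]
  exact siteSum_update_of_eq (by rw [h])

lemma pcount_setSt {c : Conf L} {v : V L} (hv : (c.occ v).isSome) (s : CState) :
    pcount (setSt c v s) = pcount c :=
  pcount_update hv.symm

lemma pcount_spreadDT {c : Conf L} {v : V L} (hv : (c.occ v).isSome) :
    pcount (spreadDT c v) = pcount c := by
  have hocc : ∀ u, ((spreadDT c v).occ u).isSome = (c.occ u).isSome := by
    intro u
    simp only [spreadDT]
    split_ifs with hu hC
    · rw [hu, hv]; rfl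
    · obtain ⟨-, g, b, hgb⟩ := hC; rw [hgb]; rfl
    · rfl
  simp only [pcount, occupiedSet, hocc]

lemma pcount_join_growth {c : Conf L} {v w : V L} (hv : (c.occ v).isSome) (s : CState) :
    pcount (setSt ⟨Function.update c.occ w (clearG (c.occ w)), c.food⟩ v s) = pcount c := by
  have hclear : (clearG (c.occ w)).isSome = (c.occ w).isSome := by
    rcases c.occ w with _ | _ | _ | _ <;> rfl
  rw [pcount_setSt, pcount_update hclear]
  show (Function.update c.occ w (clearG (c.occ w)) v).isSome
  rw [Function.update_apply]
  split_ifs with hvw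
  · rwa [hclear, ← hvw]
  · exact hv

lemma pcount_pass_growth {c : Conf L} {v u : V L} (hv : (c.occ v).isSome)
    (hu : (c.occ u).isSome) (s s' : CState) : pcount (setSt (setSt c v s) u s') = pcount c := by
  rw [pcount_setSt, pcount_setSt hv]
  by_cases huv : u = v <;> simp [setSt, huv, hu]

end ParticleCount

section

variable {L : ℕ}

lemma stateChange_of_badParticle {p : ℝ≥0∞} {hp : p ≤ 1} {c : Conf L} {v : V L}
    (hbad : badParticle c v) : stateChange p hp c v = PMF.pure (spreadDT c v) := by
  rcases hbad with hv | ⟨g, hv, hadj⟩ | ⟨g, hv, hadj⟩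
  · simp [stateChange, hv]
  all_goals simp [stateChange, hv, hadj]

lemma one_le_stateWeight_of_badParticle {c : Conf L} {v : V L} (hbad : badParticle c v) :
    1 ≤ stateWeight (c.occ v) := by
  rcases hbad with hv | ⟨g, hv, -⟩ | ⟨g, hv, -⟩ <;> rw [hv]
  · exact le_rfl
  all_goals exact one_le_stateWeight_C _ _

lemma card_filter_adjFood_le (c : Conf L) (s : Finset (V L)) :
    (s.filter fun v => adjFood c v).card ≤ 6 := by
  rcases hfood : c.food with _ | fd
  · simp [adjFood, hfood]
  calc (s.filter fun v => adjFood c v).card ≤ ((dirFinset L).image (fd - ·)).card := by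
        refine Finset.card_le_card fun v hv => ?_
        obtain ⟨-, fd', hfd', hnbr⟩ := Finset.mem_filter.mp hv
        obtain ⟨d, hd, rfl⟩ := Finset.mem_image.mp hnbr
        obtain rfl : fd = v + d := Option.some.inj (hfood.symm.trans hfd')
        exact Finset.mem_image.mpr ⟨d, hd, add_sub_cancel_right v d⟩
    _ ≤ (dirList L).length := Finset.card_image_le.trans (List.toFinset_card_le _)
    _ = 6 := rfl

end

section Steps

variable {L : ℕ} [NeZero L]

lemma mem_occupiedSet_of_badParticle {c : Conf L} {v : V L} (hbad : badParticle c v) :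
    v ∈ occupiedSet c := by
  rcases hbad with hv | ⟨g, hv, -⟩ | ⟨g, hv, -⟩ <;> simp [occupiedSet, hv]

lemma siteSum_of_mem_support_movement {f : Option CState → ℕ}
    (hf : ∀ g b b', f (some (CState.C g b)) = f (some (CState.C g b'))) {lam : ℝ}
    {c c' : Conf L} {v : V L} (h : c' ∈ (movement lam c v).support) :
    siteSum f c' = siteSum f c := by
  unfold movement at h
  split at h
  case h_1 hv =>
    obtain ⟨d, -, h⟩ := (PMF.mem_support_bind_iff _ _ _).mp h
    rw [PMF.mem_support_pure_iff] at h
    split_ifs at h with hfree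
    · exact h ▸ siteSum_moveP hfree.1 (by rw [hv])
    · rw [h]
  case h_2 _ _ hv =>
    obtain ⟨d, -, h⟩ := (PMF.mem_support_bind_iff _ _ _).mp h
    split at h
    case isTrue hvalid =>
      obtain ⟨moved, -, h⟩ := (PMF.mem_support_bind_iff _ _ _).mp h
      rw [PMF.mem_support_pure_iff] at h
      cases moved
      · exact h ▸ siteSum_setSt (by rw [hv, hf])
      · exact h ▸ siteSum_moveP hvalid.2.1 (by rw [hv, hf])
    case isFalse =>
      rw [PMF.mem_support_pure_iff] at h
      exact h ▸ siteSum_setSt (by rw [hv, hf])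
  case h_3 =>
    rw [(PMF.mem_support_pure_iff _ _).mp h]

lemma pcount_of_mem_support_movement {lam : ℝ} {c c' : Conf L} {v : V L}
    (h : c' ∈ (movement lam c v).support) : pcount c' = pcount c := by
  simp only [pcount_eq_siteSum]
  exact siteSum_of_mem_support_movement (by simp) h

lemma pcount_of_mem_support_stateChange {p : ℝ≥0∞} {hp : p ≤ 1} {c c' : Conf L} {v : V L}
    (h : c' ∈ (stateChange p hp c v).support) : pcount c' = pcount c := by
  unfold stateChange at h
  split at h
  case h_1 => rw [(PMF.mem_support_pure_iff _ _).mp h]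
  case h_2 hv =>
    have hv' : (c.occ v).isSome := by rw [hv]; rfl
    split at h
    · obtain ⟨joined, -, h⟩ := (PMF.mem_support_bind_iff _ _ _).mp h
      rw [(PMF.mem_support_pure_iff _ _).mp h]
      cases joined
      · rfl
      · exact pcount_setSt hv' _
    split at h
    case isTrue =>
      obtain ⟨w, -, h⟩ := (PMF.mem_support_bind_iff _ _ _).mp h
      obtain ⟨joined, -, h⟩ := (PMF.mem_support_bind_iff _ _ _).mp h
      rw [(PMF.mem_support_pure_iff _ _).mp h]
      cases joined
      · rfl
      · exact pcount_join_growth hv' _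
    case isFalse => rw [(PMF.mem_support_pure_iff _ _).mp h]
  case h_3 hv =>
    rw [(PMF.mem_support_pure_iff _ _).mp h]
    exact pcount_spreadDT (by rw [hv]; rfl)
  case h_4 _ _ hv =>
    have hv' : (c.occ v).isSome := by rw [hv]; rfl
    split at h
    · rw [(PMF.mem_support_pure_iff _ _).mp h]
      exact pcount_spreadDT hv'
    split at h
    · obtain ⟨d, -, h⟩ := (PMF.mem_support_bind_iff _ _ _).mp h
      rw [(PMF.mem_support_pure_iff _ _).mp h]
      split
      case h_1 b' hd => exact pcount_pass_growth hv' (by rw [hd]; rfl) _ _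
      case h_2 => rfl
    split at h
    · obtain ⟨generated, -, h⟩ := (PMF.mem_support_bind_iff _ _ _).mp h
      rw [(PMF.mem_support_pure_iff _ _).mp h]
      cases generated
      · rfl
      · exact pcount_setSt hv' _
    · rw [(PMF.mem_support_pure_iff _ _).mp h]

lemma pcount_of_mem_support_compStep {p : ℝ≥0∞} {hp : p ≤ 1} {lam : ℝ} {c c' : Conf L}
    (h : c' ∈ (compStep p hp lam c).support) : pcount c' = pcount c := by
  unfold compStep at h
  split at h
  · obtain ⟨v, -, h⟩ := (PMF.mem_support_bind_iff _ _ _).mp h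
    obtain ⟨c₁, h₁, h⟩ := (PMF.mem_support_bind_iff _ _ _).mp h
    rw [pcount_of_mem_support_movement h, pcount_of_mem_support_stateChange h₁]
  · rw [(PMF.mem_support_pure_iff _ _).mp h]

end Steps

section Drift

variable {L : ℕ} [NeZero L]

local notation "Φ" => fun c => ((potential c : ℕ) : ℝ≥0∞)

lemma expect_movement_potential (lam : ℝ) (c : Conf L) (v : V L) :
    (movement lam c v).expect Φ = potential c := by
  refine (PMF.expect_congr fun c' hc' => ?_).trans (PMF.expect_const _ _)
  rw [potential, potential, siteSum_of_mem_support_movement (fun _ _ _ => rfl) hc']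

lemma expect_stateChange_potential_le (p : ℝ≥0∞) (hp : p ≤ 1) (c : Conf L) (v : V L) :
    (stateChange p hp c v).expect Φ ≤ potential c + if adjFood c v then p else 0 := by
  have hspread : ((potential (spreadDT c v) : ℕ) : ℝ≥0∞) ≤ potential c := by
    exact_mod_cast (Nat.le_add_right _ _).trans (potential_spreadDT_add_le c v)
  unfold stateChange
  split
  case h_1 => simp
  case h_2 hv =>
    split
    case isTrue =>
      rw [PMF.expect_bind]
      refine PMF.expect_bernoulliENN_le hp ?_ (by simp)
      simp only [PMF.expect_pure, if_true]
      exact_mod_cast potential_setSt_le_succ (by simp [hv, stateWeight])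
    split
    case isTrue =>
      rw [PMF.expect_bind]
      refine le_add_right (PMF.expect_le_of_forall_le fun w hw => ?_)
      rw [PMF.mem_support_uniformOfFinset_iff, Finset.mem_filter] at hw
      obtain ⟨-, b, hw⟩ := hw
      rw [PMF.expect_bind]
      refine PMF.expect_le_of_forall_le fun joined _ => ?_
      cases joined <;> simp [potential_join_growth hv hw]
    case isFalse => simp
  case h_3 => exact (PMF.expect_pure _ _).trans_le (hspread.trans le_self_add)
  case h_4 g b hv =>
    split
    · exact (PMF.expect_pure _ _).trans_le (hspread.trans le_self_add)
    split
    case isTrue hg =>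
      subst hg
      rw [PMF.expect_bind]
      refine le_add_right (PMF.expect_le_of_forall_le fun d _ => ?_)
      split
      case h_1 b' hd => simp [potential_pass_growth hv hd]
      case h_2 => simp
    split
    case isTrue =>
      rw [PMF.expect_bind]
      refine PMF.expect_bernoulliENN_le hp ?_ (by simp)
      simp only [PMF.expect_pure, if_true]
      refine mod_cast potential_setSt_le_succ ?_
      rw [hv]
      exact (stateWeight_le_two _).trans (Nat.succ_le_succ (one_le_stateWeight_C g b))
    case isFalse => simp

lemma expect_stateChange_potential_add_one_le {p : ℝ≥0∞} {hp : p ≤ 1} {c : Conf L} {v : V L}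
    (hbad : badParticle c v) :
    (stateChange p hp c v).expect Φ + 1 ≤ potential c := by
  rw [stateChange_of_badParticle hbad, PMF.expect_pure]
  exact_mod_cast (Nat.add_le_add_left (one_le_stateWeight_of_badParticle hbad) _).trans
    (potential_spreadDT_add_le c v)

lemma expect_compStep_potential (p : ℝ≥0∞) (hp : p ≤ 1) (lam : ℝ) {c : Conf L}
    (hne : (occupiedSet c).Nonempty) :
    (compStep p hp lam c).expect Φ =
      (∑ v ∈ occupiedSet c, (stateChange p hp c v).expect Φ) / pcount c := by
  simp only [compStep, dif_pos hne, PMF.expect_bind, expect_movement_potential,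
    PMF.expect_uniformOfFinset, pcount]

lemma sum_expect_stateChange_potential_add_one_le (p : ℝ≥0∞) (hp : p ≤ 1) {c : Conf L}
    {v₀ : V L} (hbad : badParticle c v₀) :
    ∑ v ∈ occupiedSet c, (stateChange p hp c v).expect Φ + 1 ≤ pcount c * potential c + 6 * p := by
  have hv₀ := mem_occupiedSet_of_badParticle hbad
  calc ∑ v ∈ occupiedSet c, (stateChange p hp c v).expect Φ + 1
      = ((stateChange p hp c v₀).expect Φ + 1) +
          ∑ v ∈ (occupiedSet c).erase v₀, (stateChange p hp c v).expect Φ := by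
        rw [← Finset.add_sum_erase _ _ hv₀]; ring
    _ ≤ (potential c + if adjFood c v₀ then p else 0) +
          ∑ v ∈ (occupiedSet c).erase v₀, (potential c + if adjFood c v then p else 0) :=
        add_le_add ((expect_stateChange_potential_add_one_le hbad).trans le_self_add)
          (Finset.sum_le_sum fun v _ => expect_stateChange_potential_le p hp c v)
    _ = pcount c * potential c + ((occupiedSet c).filter fun v => adjFood c v).card * p := by
        rw [Finset.add_sum_erase (occupiedSet c)
            (fun v => (potential c : ℝ≥0∞) + if adjFood c v then p else 0) hv₀,
          Finset.sum_add_distrib, Finset.sum_const, ← Finset.sum_filter, Finset.sum_const,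
          nsmul_eq_mul, nsmul_eq_mul, pcount]
    _ ≤ pcount c * potential c + 6 * p := by
        gcongr
        exact_mod_cast card_filter_adjFood_le c _

lemma expect_compStep_potential_add_le {p : ℝ≥0∞} (hp : p ≤ 1) (h6p : 6 * p ≤ 1) (lam : ℝ)
    {c : Conf L} {n : ℕ} (hn : pcount c ≤ n) (hres : ¬ NoResidual c) :
    (compStep p hp lam c).expect Φ + (1 - 6 * p) / n ≤ potential c := by
  obtain ⟨v₀, hbad⟩ : ∃ v, badParticle c v := by simpa [NoResidual] using hres
  have hne : (occupiedSet c).Nonempty := ⟨v₀, mem_occupiedSet_of_badParticle hbad⟩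
  have hm : (pcount c : ℝ≥0∞) ≠ 0 := by simpa [pcount] using hne.card_pos.ne'
  set S := ∑ v ∈ occupiedSet c, (stateChange p hp c v).expect Φ
  have hS : S + (1 - 6 * p) ≤ pcount c * potential c := by
    rw [← ENNReal.add_le_add_iff_right (ne_top_of_le_ne_top ENNReal.one_ne_top h6p), add_assoc,
      tsub_add_cancel_of_le h6p]
    exact sum_expect_stateChange_potential_add_one_le p hp hbad
  calc (compStep p hp lam c).expect Φ + (1 - 6 * p) / n
      ≤ S / pcount c + (1 - 6 * p) / pcount c := by
        rw [expect_compStep_potential p hp lam hne]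
        gcongr
    _ = (S + (1 - 6 * p)) / pcount c := ENNReal.div_add_div_same
    _ ≤ potential c * pcount c / pcount c := by rw [mul_comm (potential c : ℝ≥0∞)]; gcongr
    _ = potential c := ENNReal.mul_div_cancel_right hm (ENNReal.natCast_ne_top _)

end Drift

theorem residual_components_vanish_general
    (p : ℝ≥0∞) (hp : p ≤ 1) (hp6 : p < 1 / 6) (lam : ℝ)
    (L : ℕ) [NeZero L] (c0 : Conf L) :
    ehit (compStep p hp lam) (fun c : Conf L => NoResidual c) c0 ≤
      2 * (pcount c0 : ℝ≥0∞) ^ 2 / (1 - 6 * p) := by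
  by_cases hres : NoResidual c0
  · rw [ehit_eq_zero_of_goal _ _ hres]
    exact zero_le
  have h6p : 6 * p < 1 := by
    rw [mul_comm]; exact (ENNReal.lt_div_iff_mul_lt (by simp) (by simp)).mp hp6
  obtain ⟨v₀, hbad⟩ : ∃ v, badParticle c0 v := by simpa [NoResidual] using hres
  have hn : (pcount c0 : ℝ≥0∞) ≠ 0 := by
    simpa [pcount] using (Finset.card_pos.mpr ⟨v₀, mem_occupiedSet_of_badParticle hbad⟩).ne'
  have hdrift := mul_ehit_le_of_drift (compStep p hp lam) (fun c => NoResidual c)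
    (fun c => (potential c : ℝ≥0∞)) ((1 - 6 * p) / pcount c0) (fun c => pcount c = pcount c0)
    (fun _ ha _ hb => (pcount_of_mem_support_compStep hb).trans ha)
    (fun _ ha hres => expect_compStep_potential_add_le hp h6p.le lam ha.le hres) rfl
  rw [ENNReal.le_div_iff_mul_le (Or.inl (tsub_pos_of_lt h6p).ne')
    (Or.inl (ne_top_of_le_ne_top ENNReal.one_ne_top tsub_le_self))]
  calc ehit (compStep p hp lam) (fun c => NoResidual c) c0 * (1 - 6 * p)
      = (1 - 6 * p) / pcount c0 * ehit (compStep p hp lam) (fun c => NoResidual c) c0 *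
          pcount c0 := by
        rw [mul_right_comm, ENNReal.div_mul_cancel hn (ENNReal.natCast_ne_top _), mul_comm]
    _ ≤ potential c0 * pcount c0 := by gcongr
    _ ≤ 2 * pcount c0 * pcount c0 := by gcongr; exact_mod_cast potential_le_two_mul_pcount c0
    _ = 2 * (pcount c0 : ℝ≥0∞) ^ 2 := by ring

theorem residual_components_vanish
    (p : ℝ≥0∞) (hp : p ≤ 1) (hp0 : 0 < p) (hp6 : p < 1 / 6) (lam : ℝ) (hlam : 1 < lam)
    (L : ℕ) [NeZero L] (c0 : Conf L) (hinv : StateInvariant c0) :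
    ehit (compStep p hp lam) (fun c : Conf L => NoResidual c) c0 ≤
      2 * (pcount c0 : ℝ≥0∞) ^ 2 / (1 - 6 * p) :=
  residual_components_vanish_general p hp hp6 lam L c0
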